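/- Let F be a fixed optimal shadows-minimal cover of T with the maximum number of twin links. Then d_F(a) = 1 for every leaf a of T; that is, exactly one link of F is incident to each leaf of T. -/
import Mathlib


open scoped Classical

namespace TAP

/-- A rooted tree on vertex set `V`, given by a parent function. -/
structure Tree (V : Type) where
  root : V
  parent : V → V
  parent_root : parent root = root
  reach : ∀ v, ∃ n, parent^[n] v = root

namespace Tree

variable {V : Type} (t : Tree V)

/-- `t.desc w v` : `v` lies in the rooted subtree `T_w`, i.e. `w` is an ancestor of `v` or `w = v`. -/
def desc (w v : V) : Prop := ∃ n, t.parent^[n] v = w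

/-- The depth of a node (its distance to the root). -/
noncomputable def depth (v : V) : ℕ :=
  @Nat.find (fun n => t.parent^[n] v = t.root) (Classical.decPred _) (t.reach v)

/-- `v` is a leaf of the tree: it is not the root and it has no children. -/
def IsLeaf (v : V) : Prop := v ≠ t.root ∧ ∀ u, u ≠ v → t.parent u ≠ v

/-- The tree edge `(w, parent w)` (for `w ≠ root`) lies on the tree path `P(u,v)`. -/
def onPath (w u v : V) : Prop :=
  (t.desc w u ∧ ¬ t.desc w v) ∨ (t.desc w v ∧ ¬ t.desc w u)

/-- The node `c` lies on the tree path `P(u,v)`. -/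
def onPathNode (c u v : V) : Prop :=
  (t.desc c u ∨ t.desc c v) ∧ ∀ w, t.desc w u → t.desc w v → t.desc w c

/-- `u` is the least common ancestor of `a` and `b`. -/
def IsLCA (u a b : V) : Prop :=
  t.desc u a ∧ t.desc u b ∧ ∀ w, t.desc w a → t.desc w b → t.desc w u

end Tree

variable {V : Type} [Fintype V] [DecidableEq V]

/-- The link `e` covers the tree edge `(w, parent w)`. -/
def covers (t : Tree V) (e : Sym2 V) (w : V) : Prop :=
  ∃ u v, e = s(u, v) ∧ t.onPath w u v

/-- Some link of `F` covers the tree edge `(w, parent w)`. -/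
def coveredBy (t : Tree V) (F : Finset (Sym2 V)) (w : V) : Prop :=
  ∃ e ∈ F, covers t e w

/-- `F` covers the tree: every tree edge is covered by some link of `F`
(equivalently, `T ∪ F` is 2-edge-connected). -/
def IsCover (t : Tree V) (F : Finset (Sym2 V)) : Prop :=
  ∀ w, w ≠ t.root → coveredBy t F w

/-- `e'` is a shadow of `e`, i.e. `P(e') ⊆ P(e)`. -/
def Shadow (t : Tree V) (e' e : Sym2 V) : Prop := ∀ w, covers t e' w → covers t e w

/-- `e'` is a proper shadow of `e`. -/
def ProperShadow (t : Tree V) (e' e : Sym2 V) : Prop :=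
  Shadow t e' e ∧ ∃ w, covers t e w ∧ ¬ covers t e' w

/-- The link set `E` is closed under shadows. -/
def ShadowClosed (t : Tree V) (E : Finset (Sym2 V)) : Prop :=
  ∀ e ∈ E, ∀ e' : Sym2 V, ¬ e'.IsDiag → Shadow t e' e → e' ∈ E

/-- `F` is an (inclusion-minimal) shadows-minimal cover: replacing any link of `F` by a
proper shadow of it destroys the covering property. -/
def ShadowsMinimal (t : Tree V) (F : Finset (Sym2 V)) : Prop :=
  IsCover t F ∧ (∀ e ∈ F, ¬ IsCover t (F.erase e)) ∧
  ∀ e ∈ F, ∀ e' : Sym2 V, ProperShadow t e' e → ¬ IsCover t (insert e' (F.erase e))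

/-- `deg Y x` : the number of links of `Y` incident to `x`. -/
noncomputable def deg (Y : Finset (Sym2 V)) (x : V) : ℕ := (Y.filter (fun e => x ∈ e)).card

/-! ### Contraction of a set of links -/

/-- `u` and `v` lie in the same 2-edge-connected component of `T ∪ I`,
i.e. they get identified in `T/I`. -/
def rel (t : Tree V) (I : Finset (Sym2 V)) (u v : V) : Prop :=
  ∀ w, w ≠ t.root → t.onPath w u v → coveredBy t I w

def relSetoid (t : Tree V) (I : Finset (Sym2 V)) : Setoid V where
  r := rel t I
  iseqv := by
    refine ⟨?_, ?_, ?_⟩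
    · intro u w _ hp
      rcases hp with ⟨h1, h2⟩ | ⟨h1, h2⟩ <;> exact absurd h1 h2
    · intro u v h w hw hp
      refine h w hw ?_
      rcases hp with ⟨h1, h2⟩ | ⟨h1, h2⟩
      · exact Or.inr ⟨h1, h2⟩
      · exact Or.inl ⟨h1, h2⟩
    · intro u v x h1 h2 w hw hp
      by_cases hv : t.desc w v
      · rcases hp with ⟨ha, hb⟩ | ⟨ha, hb⟩
        · exact h2 w hw (Or.inl ⟨hv, hb⟩)
        · exact h1 w hw (Or.inr ⟨hv, hb⟩)
      · rcases hp with ⟨ha, hb⟩ | ⟨ha, hb⟩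
        · exact h1 w hw (Or.inl ⟨ha, hv⟩)
        · exact h2 w hw (Or.inr ⟨ha, hv⟩)

/-- The node set of the contracted tree `T/I`. -/
abbrev QT (t : Tree V) (I : Finset (Sym2 V)) : Type := Quotient (relSetoid t I)

noncomputable instance instFintypeQT (t : Tree V) (I : Finset (Sym2 V)) : Fintype (QT t I) :=
  @Quotient.fintype V _ (relSetoid t I) (Classical.decRel _)

/-- The node of `T/I` corresponding to the node `x` of `T`. -/
def qm (t : Tree V) (I : Finset (Sym2 V)) (x : V) : QT t I := Quotient.mk (relSetoid t I) x

/-- The class of `u` is a (possibly compound) leaf of `T/I`. -/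
def qleafRep (t : Tree V) (I : Finset (Sym2 V)) (u : V) : Prop :=
  ¬ rel t I u t.root ∧ ∀ v, rel t I (t.parent v) u → rel t I v u

/-- The class of `u` lies in the rooted subtree of `T/I` rooted at the class of `v`. -/
def qdescRep (t : Tree V) (I : Finset (Sym2 V)) (v u : V) : Prop :=
  ∃ w, t.desc w u ∧ rel t I w v

/-- The class of `u` is a compound node of `T/I` (a contracted component, or the root). -/
def qcompoundRep (t : Tree V) (I : Finset (Sym2 V)) (u : V) : Prop :=
  (∃ w, w ≠ u ∧ rel t I u w) ∨ rel t I u t.root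

/-- The node `x` of `T` lies in the rooted subtree of `T/I` whose root is the class `c`. -/
def inT (t : Tree V) (I : Finset (Sym2 V)) (c : QT t I) (x : V) : Prop :=
  qdescRep t I c.out x

/-- The node `d` of `T/I` lies in the rooted subtree of `T/I` whose root is `c`. -/
def below (t : Tree V) (I : Finset (Sym2 V)) (c d : QT t I) : Prop := inT t I c d.out

/-- The class of `x` is matched by the matching `M`. -/
def matchedRep (t : Tree V) (I M : Finset (Sym2 V)) (x : V) : Prop :=
  ∃ e ∈ M, ∃ z, z ∈ e ∧ rel t I z x

/-- The class of `x` lies on the path of `T/I` between the classes of `u` and of `v`. -/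
def qOnPathNode (t : Tree V) (I : Finset (Sym2 V)) (x u v : V) : Prop :=
  (qdescRep t I x u ∨ qdescRep t I x v) ∧
  ∀ w, qdescRep t I w u → qdescRep t I w v → qdescRep t I w x

/-- The class of `x` is the least common ancestor in `T/I` of the classes of `a` and `b`. -/
def qIsLCA (t : Tree V) (I : Finset (Sym2 V)) (x a b : V) : Prop :=
  qdescRep t I x a ∧ qdescRep t I x b ∧
  ∀ w, qdescRep t I w a → qdescRep t I w b → qdescRep t I w x

/-- Depth of the class of `x` in `T/I`. -/
noncomputable def qdepth (t : Tree V) (I : Finset (Sym2 V)) (x : V) : ℕ :=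
  (Finset.univ.filter (fun w => w ≠ t.root ∧ ¬ coveredBy t I w ∧ t.desc w x)).card

/-- `u` is an up-node of (the class of) `a` in `T/I` : among all links of `E` leaving the
class of `a`, some link from the class of `a` to `u` has its other end as close as possible
to the root. -/
def qUpNode (t : Tree V) (I E : Finset (Sym2 V)) (a u : V) : Prop :=
  (∃ b, rel t I b a ∧ s(b, u) ∈ E) ∧ ¬ rel t I u a ∧
  ∀ b x, rel t I b a → s(b, x) ∈ E → ¬ rel t I x a → qdepth t I u ≤ qdepth t I x

/-- `s(a,b)` is a twin link of `T/I` : a link of `E` between two distinct leaves of `T/I`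
whose contraction results in a new leaf. -/
def qTwinAt (t : Tree V) (I E : Finset (Sym2 V)) (a b : V) : Prop :=
  qleafRep t I a ∧ qleafRep t I b ∧ ¬ rel t I a b ∧ s(a, b) ∈ E ∧
  qleafRep t (insert (s(a, b)) I) a

/-- The class of `x` is a stem of `T/I` : the least common ancestor of the two ends
of a twin link. -/
def qStem (t : Tree V) (I E : Finset (Sym2 V)) (x : V) : Prop :=
  ∃ a b, qTwinAt t I E a b ∧ qIsLCA t I x a b

/-! ### Twin links, stems, up-links and locked leaves in the original tree -/

/-- `a` and `b` are twins: two leaves such that the contraction of the link `ab`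
results in a new leaf. -/
def TwinPair (t : Tree V) (a b : V) : Prop :=
  t.IsLeaf a ∧ t.IsLeaf b ∧ a ≠ b ∧ qleafRep t {s(a, b)} a

/-- `e` is a twin link. -/
def IsTwinLinkE (t : Tree V) (e : Sym2 V) : Prop := ∃ a b, e = s(a, b) ∧ TwinPair t a b

/-- `x` is a stem: the least common ancestor of two twins. -/
def IsStem (t : Tree V) (E : Finset (Sym2 V)) (x : V) : Prop :=
  ∃ a b, TwinPair t a b ∧ s(a, b) ∈ E ∧ t.IsLCA x a b

noncomputable def stems (t : Tree V) (E : Finset (Sym2 V)) : Finset V :=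
  Finset.univ.filter (IsStem t E)

/-- `X = V \ (L ∪ S)`. -/
noncomputable def Xset (t : Tree V) (E : Finset (Sym2 V)) : Finset V :=
  Finset.univ.filter (fun x => ¬ t.IsLeaf x ∧ ¬ IsStem t E x)

/-- `s(a,u)` is the up-link of `a` : among all links of `E` at `a`, its other end `u` is
as close as possible to the root (`u` is the up-node of `a`). -/
def IsUpLink (t : Tree V) (E : Finset (Sym2 V)) (a u : V) : Prop :=
  s(a, u) ∈ E ∧ ∀ x, s(a, x) ∈ E → t.depth u ≤ t.depth x

/-- The rooted subtree `T_v` is `a`-closed: it contains the up-node of `a`. -/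
def AClosed (t : Tree V) (E : Finset (Sym2 V)) (v a : V) : Prop :=
  ∀ u, IsUpLink t E a u → t.desc v u

/-- The rooted proper subtree `T_v` witnesses that the leaf `a` is locked by the link `bb'` :
`L(T_v) = {a,b,b'}`, `ab` is a twin link and `T_v` is `a`-closed. -/
def LocksAt (t : Tree V) (E : Finset (Sym2 V)) (b b' a v : V) : Prop :=
  v ≠ t.root ∧ s(b, b') ∈ E ∧ b ≠ b' ∧ b' ≠ a ∧
  {x | t.IsLeaf x ∧ t.desc v x} = {a, b, b'} ∧
  TwinPair t a b ∧ s(a, b) ∈ E ∧ AClosed t E v a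

/-- The leaf `a` is locked by the link `bb'`. -/
def Locks (t : Tree V) (E : Finset (Sym2 V)) (b b' a : V) : Prop :=
  ∃ v, LocksAt t E b b' a v

def IsLockedLeaf (t : Tree V) (E : Finset (Sym2 V)) (a : V) : Prop :=
  ∃ b b', Locks t E b b' a

def IsLockingLink (t : Tree V) (E : Finset (Sym2 V)) (e : Sym2 V) : Prop :=
  ∃ b b' a, e = s(b, b') ∧ Locks t E b b' a

/-- `T_v` is the locking tree of `a` (with locking link `bb'`): the minimal rooted subtree
witnessing the lock. -/
def IsLockingTree (t : Tree V) (E : Finset (Sym2 V)) (a b b' v : V) : Prop :=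
  LocksAt t E b b' a v ∧ ∀ v', LocksAt t E b b' a v' → t.desc v' v

/-! ### The fixed optimal cover `F` -/

noncomputable def twinCount (t : Tree V) (F : Finset (Sym2 V)) : ℕ :=
  (F.filter (fun e => IsTwinLinkE t e)).card

/-- `F` is an optimal (minimum-size) shadows-minimal cover of `T` with the maximum
number of twin links. -/
def IsGoodCover (t : Tree V) (E F : Finset (Sym2 V)) : Prop :=
  F ⊆ E ∧ ShadowsMinimal t F ∧
  (∀ F' : Finset (Sym2 V), F' ⊆ E → IsCover t F' → F.card ≤ F'.card) ∧
  (∀ F' : Finset (Sym2 V), F' ⊆ E → ShadowsMinimal t F' → F'.card = F.card →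
    twinCount t F' ≤ twinCount t F)

/-! ### Matchings and the lower bound -/

def IsMatching (M : Finset (Sym2 V)) : Prop :=
  (∀ e ∈ M, ¬ e.IsDiag) ∧ ∀ e ∈ M, ∀ f ∈ M, e ≠ f → ∀ x, x ∈ e → x ∉ f

/-- `E(L,L)` : the links of `E` joining two leaves. -/
noncomputable def leafLinks (t : Tree V) (E : Finset (Sym2 V)) : Finset (Sym2 V) :=
  E.filter (fun e => ∀ x ∈ e, t.IsLeaf x)

/-- `W` : the set of twin links and locking links. -/
noncomputable def Wlinks (t : Tree V) (E : Finset (Sym2 V)) : Finset (Sym2 V) :=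
  E.filter (fun e => IsTwinLinkE t e ∨ IsLockingLink t E e)

/-- `M` is a maximum matching in `E(L,L) \ W`. -/
def IsMaxLeafMatching (t : Tree V) (E M : Finset (Sym2 V)) : Prop :=
  M ⊆ leafLinks t E \ Wlinks t E ∧ IsMatching M ∧
  ∀ M' : Finset (Sym2 V), M' ⊆ leafLinks t E \ Wlinks t E → IsMatching M' → M'.card ≤ M.card

/-- `U` : the set of leaves unmatched by `M`. -/
noncomputable def unmatchedLeaves (t : Tree V) (M : Finset (Sym2 V)) : Finset V :=
  Finset.univ.filter (fun a => t.IsLeaf a ∧ ∀ e ∈ M, a ∉ e)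

/-- `M_F = F(L,L) \ W`. -/
noncomputable def MFlinks (t : Tree V) (E F : Finset (Sym2 V)) : Finset (Sym2 V) :=
  (F.filter (fun e => ∀ x ∈ e, t.IsLeaf x)) \ Wlinks t E

/-- `N = {bb' ∈ M : each of b, b' is unmatched by M_F}`. -/
noncomputable def Nlinks (t : Tree V) (E F M : Finset (Sym2 V)) : Finset (Sym2 V) :=
  M.filter (fun e => ∀ b ∈ e, ∀ f ∈ MFlinks t E F, b ∉ f)

/-- `J` : the set of links of `F` not incident to a locked leaf. -/
noncomputable def Jlinks (t : Tree V) (E F : Finset (Sym2 V)) : Finset (Sym2 V) :=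
  F.filter (fun e => ∀ x ∈ e, ¬ IsLockedLeaf t E x)

/-- The lower bound `(3/2)|M| + |U| + (1/2)|N| + (1/2) Σ_{x ∈ X} d_J(x)`. -/
noncomputable def LB (t : Tree V) (E F M : Finset (Sym2 V)) : ℚ :=
  (3 / 2 : ℚ) * (M.card : ℚ) + ((unmatchedLeaves t M).card : ℚ)
    + (1 / 2 : ℚ) * ((Nlinks t E F M).card : ℚ)
    + (1 / 2 : ℚ) * ∑ x ∈ Xset t E, (deg (Jlinks t E F) x : ℚ)

/-! ### Subtrees of `T/I`, semi-closed trees, credits -/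

/-- `T'` (the rooted subtree of `T/I` with root `c`) is `M`-compatible. -/
def MCompatible (t : Tree V) (I M : Finset (Sym2 V)) (c : QT t I) : Prop :=
  ∀ e ∈ M, (∀ x ∈ e, inT t I c x) ∨ (∀ x ∈ e, ¬ inT t I c x)

/-- `T'` is semi-closed (w.r.t. `M`): `M`-compatible and closed w.r.t. its unmatched leaves. -/
def SemiClosedQ (t : Tree V) (I E M : Finset (Sym2 V)) (c : QT t I) : Prop :=
  MCompatible t I M c ∧
  ∀ x y, s(x, y) ∈ E → inT t I c x → qleafRep t I x → ¬ matchedRep t I M x → inT t I c y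

/-- `T'` is minimally semi-closed. -/
def MinSemiClosedQ (t : Tree V) (I E M : Finset (Sym2 V)) (c : QT t I) : Prop :=
  SemiClosedQ t I E M c ∧
  ∀ c' : QT t I, below t I c c' → c' ≠ c → ¬ SemiClosedQ t I E M c'

/-- `I'` is an exact cover of `T'` : the set of edges of `T/I` covered by `I'` is exactly
the edge set of `T'`. -/
def IsExactCoverQ (t : Tree V) (I : Finset (Sym2 V)) (c : QT t I) (I' : Finset (Sym2 V)) : Prop :=
  ∀ w, w ≠ t.root → ¬ coveredBy t I w → (coveredBy t I' w ↔ inT t I c (t.parent w))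

/-- `up(U')` : the set of up-links of the unmatched leaves of `T'`. -/
noncomputable def upOfQ (t : Tree V) (I E M : Finset (Sym2 V)) (c : QT t I) :
    Finset (Sym2 V) :=
  E.filter (fun e => ∃ a u, e = s(a, u) ∧ inT t I c a ∧ qleafRep t I a ∧
    ¬ matchedRep t I M a ∧ qUpNode t I E a u)

/-- `M` is a matching on the leaves of `T/I`. -/
def IsLeafMatchingQ (t : Tree V) (I M : Finset (Sym2 V)) : Prop :=
  (∀ e ∈ M, ∃ a b, e = s(a, b) ∧ qleafRep t I a ∧ qleafRep t I b ∧ ¬ rel t I a b) ∧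
  ∀ e ∈ M, ∀ f ∈ M, e ≠ f → ∀ x, x ∈ e → ∀ y, y ∈ f → ¬ rel t I x y

/-- `L' = L(T')` as a set of nodes of `T/I`. -/
noncomputable def LsetQ (t : Tree V) (I : Finset (Sym2 V)) (c : QT t I) : Finset (QT t I) :=
  Finset.univ.filter (fun d => below t I c d ∧ qleafRep t I d.out)

/-- `U'` : the `M`-unmatched leaves of `T'`. -/
noncomputable def UsetQ (t : Tree V) (I M : Finset (Sym2 V)) (c : QT t I) : Finset (QT t I) :=
  Finset.univ.filter
    (fun d => below t I c d ∧ qleafRep t I d.out ∧ ¬ matchedRep t I M d.out)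

/-- `C'` : the non-leaf compound nodes of `T'`. -/
noncomputable def CsetQ (t : Tree V) (I : Finset (Sym2 V)) (c : QT t I) : Finset (QT t I) :=
  Finset.univ.filter
    (fun d => below t I c d ∧ qcompoundRep t I d.out ∧ ¬ qleafRep t I d.out)

/-- `M' = M(T')` : the links of `M` with both ends in `T'`. -/
noncomputable def MlinksQ (t : Tree V) (I M : Finset (Sym2 V)) (c : QT t I) :
    Finset (Sym2 V) :=
  M.filter (fun e => ∀ x ∈ e, inT t I c x)

/-- `S'` : the stems of `T'`. -/
noncomputable def SsetQ (t : Tree V) (I E : Finset (Sym2 V)) (c : QT t I) : Finset (QT t I) :=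
  Finset.univ.filter (fun d => below t I c d ∧ qStem t I E d.out)

/-- `S'_1` : the stems of `T'` whose twin link lies in `F`. -/
noncomputable def S1setQ (t : Tree V) (I E F : Finset (Sym2 V)) (c : QT t I) :
    Finset (QT t I) :=
  Finset.univ.filter (fun d => below t I c d ∧
    ∃ a b, qTwinAt t I E a b ∧ s(a, b) ∈ F ∧ qIsLCA t I d.out a b)

/-- `X'` : the original nodes of `T'` lying in `X`. -/
noncomputable def XsetQ (t : Tree V) (I E : Finset (Sym2 V)) (c : QT t I) : Finset (QT t I) :=
  Finset.univ.filter
    (fun d => below t I c d ∧ ¬ qcompoundRep t I d.out ∧ d.out ∈ Xset t E)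

/-- `tickets(T') = |N(T')| + Σ_{x ∈ X'} d_J(x)`. -/
noncomputable def ticketsQ (t : Tree V) (I E F M : Finset (Sym2 V)) (c : QT t I) : ℕ :=
  ((Nlinks t E F M).filter (fun e => ∀ x ∈ e, inT t I c x)).card
    + ∑ d ∈ XsetQ t I E c, deg (Jlinks t E F) d.out

/-- `coupons(T')` : one coupon for each unmatched leaf and each compound node of `T'`,
and `3/2` coupons for each link of `M(T')`. -/
noncomputable def couponsQ (t : Tree V) (I M : Finset (Sym2 V)) (c : QT t I) : ℚ :=
  ((Finset.univ.filter (fun d : QT t I => below t I c d ∧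
      ((qleafRep t I d.out ∧ ¬ matchedRep t I M d.out) ∨ qcompoundRep t I d.out))).card : ℚ)
    + (3 / 2 : ℚ) * ((MlinksQ t I M c).card : ℚ)

/-- `credit(T') = coupons(T') + tickets(T')/2`. -/
noncomputable def creditQ (t : Tree V) (I E F M : Finset (Sym2 V)) (c : QT t I) : ℚ :=
  couponsQ t I M c + (ticketsQ t I E F M c : ℚ) / 2

/-- `T'` is deficient: `credit(T') < |U'| + |M'| + 1`. -/
def DeficientQ (t : Tree V) (I E F M : Finset (Sym2 V)) (c : QT t I) : Prop :=
  creditQ t I E F M c < ((UsetQ t I M c).card : ℚ) + ((MlinksQ t I M c).card : ℚ) + 1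

/-! ### Invariants and greedy steps -/

/-- Credit Invariant: the credit of every subtree of `T/I` is distributed as described:
coupons on unmatched leaves, compound nodes and links of `M`, tickets on links of `N` and
original nodes of `X`. -/
def CreditInvariant (t : Tree V) (E F M I : Finset (Sym2 V)) : Prop :=
  F ⊆ E ∧ M ⊆ E ∧
  ∀ c : QT t I, creditQ t I E F M c = couponsQ t I M c + (ticketsQ t I E F M c : ℚ) / 2

/-- Degree in `T/I` : the number of links of `F` with exactly one end in the class of `x`. -/
noncomputable def qdegQ (t : Tree V) (I F : Finset (Sym2 V)) (x : V) : ℕ :=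
  (F.filter (fun e => (∃ z, z ∈ e ∧ rel t I z x) ∧ ∃ z, z ∈ e ∧ ¬ rel t I z x)).card

/-- Matching Invariant: `M` is a matching on the leaves of `T/I` and `d_F(b) = 1` for
every leaf `b` of `T/I` matched by `M`. -/
def MatchingInvariant (t : Tree V) (F M I : Finset (Sym2 V)) : Prop :=
  IsLeafMatchingQ t I M ∧ ∀ e ∈ M, ∀ b, b ∈ e → qdegQ t I F b = 1

/-- A greedy locking-tree contraction step. -/
def LockStep (t : Tree V) (E M : Finset (Sym2 V)) (I I₂ : Finset (Sym2 V)) : Prop :=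
  ∃ a b b' v u,
    IsLockingTree t E a b b' v ∧
    (∀ e ∈ M, a ∉ e) ∧ (∀ e ∈ M, b ∉ e) ∧ (∀ e ∈ M, b' ∉ e) ∧
    (∀ c c' v', IsLockingTree t E b c c' v' → t.desc v v') ∧
    IsUpLink t E a u ∧ I₂ = I ∪ {s(b, b'), s(a, u)}

/-- A greedy link contraction step: contract a link of `E` joining two `M`-unmatched
leaves of `T/I`. -/
def LinkStep (t : Tree V) (E M : Finset (Sym2 V)) (I I₂ : Finset (Sym2 V)) : Prop :=
  ∃ x y, s(x, y) ∈ E ∧ ¬ rel t I x y ∧ qleafRep t I x ∧ qleafRep t I y ∧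
    ¬ matchedRep t I M x ∧ ¬ matchedRep t I M y ∧ I₂ = insert (s(x, y)) I

/-- Contraction of a semi-closed tree with an exact cover. -/
def SemiStep (t : Tree V) (E M : Finset (Sym2 V)) (I I₂ : Finset (Sym2 V)) : Prop :=
  ∃ (c : QT t I) (I' : Finset (Sym2 V)), I' ⊆ E ∧ SemiClosedQ t I E M c ∧
    IsExactCoverQ t I c I' ∧ I₂ = I ∪ I'

/-- A sequence of greedy locking-tree contractions starting from the empty partial solution. -/
inductive LockPhase {V : Type} [Fintype V] [DecidableEq V]
    (t : Tree V) (E M : Finset (Sym2 V)) : Finset (Sym2 V) → Prop where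
  | base : LockPhase t E M ∅
  | step {I I₂ : Finset (Sym2 V)} :
      LockPhase t E M I → LockStep t E M I I₂ → LockPhase t E M I₂

/-- Partial Solution Invariant: `I` is obtained by first exhausting greedy locking-tree
contractions, and then sequentially applying greedy link contractions or contractions of
semi-closed trees with exact covers. -/
inductive PSI {V : Type} [Fintype V] [DecidableEq V]
    (t : Tree V) (E M : Finset (Sym2 V)) : Finset (Sym2 V) → Prop where
  | start {I : Finset (Sym2 V)} :
      LockPhase t E M I → (∀ I₂, ¬ LockStep t E M I I₂) → PSI t E M I
  | link {I I₂ : Finset (Sym2 V)} : PSI t E M I → LinkStep t E M I I₂ → PSI t E M I₂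
  | semi {I I₂ : Finset (Sym2 V)} : PSI t E M I → SemiStep t E M I I₂ → PSI t E M I₂

/-! ### Dangerous trees -/

/-- The witness structure of a 3-leaf dangerous tree: `a` is the unmatched leaf,
`b, b'` are the matched leaves, `ab' ∈ E`, the contraction of `ab'` does not create a new
leaf, and `T'` is `b`-open. -/
def Witness3 (t : Tree V) (I E M : Finset (Sym2 V)) (c : QT t I) (a b b' : V) : Prop :=
  inT t I c a ∧ inT t I c b ∧ inT t I c b' ∧
  qleafRep t I a ∧ qleafRep t I b ∧ qleafRep t I b' ∧
  ¬ rel t I a b ∧ ¬ rel t I a b' ∧ ¬ rel t I b b' ∧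
  ¬ matchedRep t I M a ∧ matchedRep t I M b ∧ matchedRep t I M b' ∧
  (∃ x y, s(x, y) ∈ E ∧ rel t I x a ∧ rel t I y b' ∧
    ¬ qleafRep t (insert (s(x, y)) I) x) ∧
  (∃ u, qUpNode t I E b u ∧ ¬ inT t I c u)

/-- A 3-leaf dangerous tree. -/
def Dangerous3 (t : Tree V) (I E M : Finset (Sym2 V)) (c : QT t I) : Prop :=
  SemiClosedQ t I E M c ∧ (CsetQ t I c).card = 0 ∧ (MlinksQ t I M c).card = 1 ∧
  (LsetQ t I c).card = 3 ∧ (SsetQ t I E c).card = 0 ∧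
  ∃ a b b', Witness3 t I E M c a b b'

/-- A dangerous tree: a 3-leaf dangerous tree, or a 4-leaf tree with one stem, exactly one
twin of which is matched, such that contracting the twin link yields a 3-leaf dangerous tree. -/
def Dangerous (t : Tree V) (I E M : Finset (Sym2 V)) (c : QT t I) : Prop :=
  Dangerous3 t I E M c ∨
  (SemiClosedQ t I E M c ∧ (CsetQ t I c).card = 0 ∧ (MlinksQ t I M c).card = 1 ∧
    (LsetQ t I c).card = 4 ∧ (SsetQ t I E c).card = 1 ∧
    ∃ a b, qTwinAt t I E a b ∧ inT t I c a ∧ inT t I c b ∧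
      (matchedRep t I M a ↔ ¬ matchedRep t I M b) ∧
      Dangerous3 t (insert (s(a, b)) I) E M (qm t (insert (s(a, b)) I) c.out))

/-! ### The switching construction -/

/-- `W̃` : for every 4-leaf minimally semi-closed (dangerous) tree of `T/I`, its twin link. -/
noncomputable def Wtil (t : Tree V) (I E M : Finset (Sym2 V)) : Finset (Sym2 V) :=
  E.filter (fun e => ∃ (a b : V) (c : QT t I), e = s(a, b) ∧ MinSemiClosedQ t I E M c ∧
    (LsetQ t I c).card = 4 ∧ qTwinAt t I E a b ∧ inT t I c a ∧ inT t I c b)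

/-- The canonical ordering witness of a 3-leaf dangerous tree: if both orderings of the
matched leaves qualify, the up-node of `b` is an ancestor of the up-node of `b'`. -/
def Witness3Canon (t : Tree V) (I E M : Finset (Sym2 V)) (c : QT t I) (a b b' : V) : Prop :=
  Witness3 t I E M c a b b' ∧
  (Witness3 t I E M c a b' b →
    ∃ u u', qUpNode t I E b u ∧ qUpNode t I E b' u' ∧ qdescRep t I u u')

/-- `M̃` is obtained from `M` by switching, in each (3-leaf dangerous) tree `D̃` of `T̃`
corresponding to a minimally semi-closed tree of `T/I`, the matching link `bb'` to `ab'`. -/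
def SwitchedMatching (t : Tree V) (I E M Mt : Finset (Sym2 V)) : Prop :=
  ∀ e : Sym2 V, e ∈ Mt ↔
    ((e ∈ M ∧ ∀ c : QT t I, MinSemiClosedQ t I E M c →
        ∀ x, x ∈ e → ¬ inT t (I ∪ Wtil t I E M) (qm t (I ∪ Wtil t I E M) c.out) x) ∨
     (∃ (c : QT t I) (a b b' x y : V), MinSemiClosedQ t I E M c ∧
        Witness3Canon t (I ∪ Wtil t I E M) E M (qm t (I ∪ Wtil t I E M) c.out) a b b' ∧
        e = s(x, y) ∧ e ∈ E ∧ rel t (I ∪ Wtil t I E M) x a ∧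
        rel t (I ∪ Wtil t I E M) y b' ∧
        ¬ qleafRep t (insert e (I ∪ Wtil t I E M)) x))

lemma desc_self (t : Tree V) (a : V) : t.desc a a := ⟨0, rfl⟩

lemma leaf_desc_eq {t : Tree V} {a x : V} (h : t.IsLeaf a) (hd : t.desc a x) : x = a := by
  obtain ⟨n, hn⟩ := hd
  induction n generalizing x with
  | zero => exact hn
  | succ n ih =>
      rw [Function.iterate_succ_apply'] at hn
      have hx : t.parent^[n] x = a := by
        by_contra hne; exact h.2 _ hne hn
      exact ih hx

lemma desc_parent {t : Tree V} {w a : V} (h : t.desc w (t.parent a)) : t.desc w a := by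
  obtain ⟨n, hn⟩ := h
  exact ⟨n + 1, by rw [Function.iterate_succ_apply]; exact hn⟩

lemma desc_of_ne {t : Tree V} {w a : V} (h : t.desc w a) (hne : w ≠ a) :
    t.desc w (t.parent a) := by
  obtain ⟨n, hn⟩ := h
  cases n with
  | zero => exact absurd hn.symm hne
  | succ n => exact ⟨n, by rw [Function.iterate_succ_apply] at hn; exact hn⟩

lemma parent_ne {t : Tree V} {a : V} (h : a ≠ t.root) : t.parent a ≠ a := by
  intro he
  have hall : ∀ n, t.parent^[n] a = a := by
    intro n
    induction n with
    | zero => rfl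
    | succ n ih => rw [Function.iterate_succ_apply, he, ih]
  obtain ⟨n, hn⟩ := t.reach a
  exact h ((hall n).symm.trans hn)

lemma covers_iff {t : Tree V} {u v w : V} : covers t s(u, v) w ↔ t.onPath w u v := by
  constructor
  · rintro ⟨x, y, hxy, hp⟩
    rw [Sym2.eq_iff] at hxy
    rcases hxy with ⟨rfl, rfl⟩ | ⟨rfl, rfl⟩
    · exact hp
    · exact hp.symm
  · intro h; exact ⟨u, v, rfl, h⟩

lemma exists_other {a : V} {e : Sym2 V} (h : a ∈ e) : ∃ u, e = s(a, u) := by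
  induction e using Sym2.ind with
  | _ x y =>
    rw [Sym2.mem_iff] at h
    rcases h with rfl | rfl
    · exact ⟨y, rfl⟩
    · exact ⟨x, Sym2.eq_swap⟩

lemma leaf_mem_of_covers {t : Tree V} {a : V} (hleaf : t.IsLeaf a) {e : Sym2 V}
    (hc : covers t e a) : a ∈ e := by
  obtain ⟨x, y, rfl, hp⟩ := hc
  rw [Sym2.mem_iff]
  rcases hp with ⟨h1, _⟩ | ⟨h1, _⟩
  · exact Or.inl (leaf_desc_eq hleaf h1).symm
  · exact Or.inr (leaf_desc_eq hleaf h1).symm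

lemma two_links_absurd {t : Tree V} {E F : Finset (Sym2 V)}
    (hnd : ∀ e ∈ E, ¬ e.IsDiag) (hF : IsGoodCover t E F) {a : V} (hleaf : t.IsLeaf a)
    {e f : Sym2 V} (he : e ∈ F) (hf : f ∈ F) (hae : a ∈ e) (haf : a ∈ f)
    (hne : e ≠ f) : False := by
  obtain ⟨u, rfl⟩ := exists_other hae
  obtain ⟨v, hfv⟩ := exists_other haf
  have hFE := hF.1
  have hmin := hF.2.1
  have hua : u ≠ a := by
    intro h; subst h
    exact hnd _ (hFE he) (by rw [Sym2.isDiag_iff_proj_eq])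
  have hva : v ≠ a := by
    intro h; subst h
    exact hnd _ (hFE hf) (by rw [hfv] at hf ⊢; rw [Sym2.isDiag_iff_proj_eq])
  have hroot : a ≠ t.root := hleaf.1
  have hpa : t.parent a ≠ a := parent_ne hroot
  have hshadow : Shadow t s(t.parent a, u) s(a, u) := by
    intro w hw
    rw [covers_iff] at hw ⊢
    rcases hw with ⟨h1, h2⟩ | ⟨h1, h2⟩
    · exact Or.inl ⟨desc_parent h1, h2⟩
    · refine Or.inr ⟨h1, fun hw' => ?_⟩
      by_cases hwa : w = a
      · subst hwa; exact hua (leaf_desc_eq hleaf h1)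
      · exact h2 (desc_of_ne hw' hwa)
  have hcov_a : covers t s(a, u) a :=
    covers_iff.mpr (Or.inl ⟨desc_self t a, fun h => hua (leaf_desc_eq hleaf h)⟩)
  have hncov : ¬ covers t s(t.parent a, u) a := by
    rw [covers_iff]
    rintro (⟨h1, _⟩ | ⟨h1, _⟩)
    · exact hpa (leaf_desc_eq hleaf h1)
    · exact hua (leaf_desc_eq hleaf h1)
  have hproper : ProperShadow t s(t.parent a, u) s(a, u) :=
    ⟨hshadow, a, hcov_a, hncov⟩
  refine hmin.2.2 _ he _ hproper ?_
  intro w hw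
  obtain ⟨g, hg, hgcov⟩ := hmin.1 w hw
  by_cases hge : g = s(a, u)
  · subst hge
    by_cases hwa : w = a
    · subst hwa
      refine ⟨f, Finset.mem_insert_of_mem (Finset.mem_erase.mpr ⟨fun h => hne h.symm, hf⟩), ?_⟩
      rw [hfv]
      exact covers_iff.mpr (Or.inl ⟨desc_self t w, fun h => hva (leaf_desc_eq hleaf h)⟩)
    · refine ⟨s(t.parent a, u), Finset.mem_insert_self _ _, ?_⟩
      rw [covers_iff] at hgcov ⊢
      rcases hgcov with ⟨h1, h2⟩ | ⟨h1, h2⟩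
      · exact Or.inl ⟨desc_of_ne h1 hwa, h2⟩
      · exact Or.inr ⟨h1, fun h => h2 (desc_parent h)⟩
  · exact ⟨g, Finset.mem_insert_of_mem (Finset.mem_erase.mpr ⟨hge, hg⟩), hgcov⟩

/-- `d_F(a) = 1` for every leaf `a` of `T`. -/
theorem leaf_degree_one (t : Tree V) (E F : Finset (Sym2 V))
    (hnd : ∀ e ∈ E, ¬ e.IsDiag) (hsh : ShadowClosed t E) (hF : IsGoodCover t E F) :
    ∀ a : V, t.IsLeaf a → deg F a = 1 := by
  intro a hleaf
  have hmin := hF.2.1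
  obtain ⟨e₀, he₀, hc₀⟩ := hmin.1 a hleaf.1
  have hmem : e₀ ∈ F.filter (fun e => a ∈ e) :=
    Finset.mem_filter.mpr ⟨he₀, leaf_mem_of_covers hleaf hc₀⟩
  refine le_antisymm ?_ ?_
  · refine Finset.card_le_one.mpr ?_
    intro e hee f hff
    rw [Finset.mem_filter] at hee hff
    by_contra hne
    exact two_links_absurd hnd hF hleaf hee.1 hff.1 hee.2 hff.2 hne
  · exact Finset.card_pos.mpr ⟨e₀, hmem⟩

end TAP
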